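/- arXiv:2207.01689 — 2 statements merged into one kernel-verified Lean document; each statement's English description precedes it below -/
import Mathlib

section
/- For |q|<1, |p|<1, |x|<1, |y|<1 and p^c ≠ 1: Ψ₁(q^a,p^{b+1};p^c,q^d;q,p,x,y) = Ψ₁(q^a,p^b;p^c,q^d;q,p,x,y) + [p^b(1−q^a)y/(1−p^c)]·Ψ₁(q^{a+1},p^{b+1};p^{c+1},q^d;q,p,x,y). -/
open scoped BigOperators
open Filter

/-- q-shifted factorial `(z;q)_k`. -/
noncomputable def qPoch (q z : ℂ) (k : ℕ) : ℂ :=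
  ∏ r ∈ Finset.range k, (1 - z * q ^ r)

/-- infinite q-shifted factorial `(z;q)_∞`. -/
noncomputable def qPochInf (q z : ℂ) : ℂ := ∏' r : ℕ, (1 - z * q ^ r)

/-- bibasic Humbert function `Ψ₁(A,B;C,D;q,p,x,y)` with `A=qᵃ, B=pᵇ, C=pᶜ, D=q^d`. -/
noncomputable def Psi1 (q p A B C D x y : ℂ) : ℂ :=
  ∑' kl : ℕ × ℕ,
    qPoch q A (kl.1 + kl.2) * qPoch p B kl.2 /
      (qPoch p C kl.2 * qPoch q D kl.1 * qPoch q q kl.1 * qPoch p p kl.2) *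
      x ^ kl.1 * y ^ kl.2

/-- bibasic Humbert function `Ψ₂(A;B,C;q,p,x,y)` with `A=qᵃ, B=pᵇ, C=qᶜ`. -/
noncomputable def Psi2 (q p A B C x y : ℂ) : ℂ :=
  ∑' kl : ℕ × ℕ,
    qPoch q A (kl.1 + kl.2) /
      (qPoch p B kl.2 * qPoch q C kl.1 * qPoch q q kl.1 * qPoch p p kl.2) *
      x ^ kl.1 * y ^ kl.2

/-- the q-difference operator `D_{x,q}`. -/
noncomputable def qDiff (q : ℂ) (f : ℂ → ℂ) : ℂ → ℂ :=
  fun x => (f x - f (q * x)) / ((1 - q) * x)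

/-- basic hypergeometric series `₂φ₁(A,B;C;q,x)`. -/
noncomputable def phi21 (q A B C x : ℂ) : ℂ :=
  ∑' k : ℕ, qPoch q A k * qPoch q B k / (qPoch q C k * qPoch q q k) * x ^ k

/-- basic confluent hypergeometric series `₁φ₁(A;C;q,z)`. -/
noncomputable def phi11 (q A C z : ℂ) : ℂ :=
  ∑' k : ℕ, qPoch q A k / (qPoch q C k * qPoch q q k) *
    (-1) ^ k * q ^ (k * (k - 1) / 2) * z ^ k

/-!
Subtract the two series termwise. The terms with `ℓ = 0` agree, and for `ℓ ≥ 1`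
`(Bp;p)_ℓ - (B;p)_ℓ = B (1 - p^ℓ) (Bp;p)_{ℓ-1}`; the factor `1 - p^ℓ` cancels against
`(p;p)_ℓ`, and peeling the first factor off `(A;q)_{k+ℓ}` and `(C;p)_ℓ` turns the `(k, ℓ)` term
into `B (1 - A) y / (1 - C)` times the `(k, ℓ - 1)` term of the shifted series.
All series converge absolutely because `(z;q)_k` and `1 / (z;q)_k` are bounded in `k`: both are
partial products of convergent infinite products.
-/

open Finset Topology

theorem exists_norm_prod_range_le {R : Type*} [NormedCommRing R] [NormOneClass R]
    [CompleteSpace R] {f : ℕ → R} (hf : Summable fun r => ‖f r - 1‖) :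
    ∃ C, ∀ k, ‖∏ r ∈ range k, f r‖ ≤ C := by
  have hmul : Multipliable f := by simpa using multipliable_one_add_of_summable hf
  obtain ⟨C, hC⟩ := hmul.tendsto_prod_tprod_nat.norm.bddAbove_range
  exact ⟨C, fun k => hC ⟨k, rfl⟩⟩

theorem norm_inv_one_sub_sub_one_le {𝕜 : Type*} [NormedField 𝕜] {u : 𝕜} (hu : ‖u‖ ≤ 1 / 2) :
    ‖(1 - u)⁻¹ - 1‖ ≤ 2 * ‖u‖ := by
  have hlow : 1 / 2 ≤ ‖1 - u‖ := by
    have := norm_sub_norm_le (1 : 𝕜) u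
    rw [norm_one] at this
    linarith
  have hne : 1 - u ≠ 0 := norm_pos_iff.1 (by linarith)
  rw [show (1 - u)⁻¹ - 1 = u / (1 - u) by field_simp; ring, norm_div,
    div_le_iff₀ (by linarith)]
  nlinarith [norm_nonneg u]

namespace qPoch

variable {q : ℂ}

@[simp]
theorem zero (q z : ℂ) : qPoch q z 0 = 1 := by simp [qPoch]

theorem succ (q z : ℂ) (n : ℕ) : qPoch q z (n + 1) = qPoch q z n * (1 - z * q ^ n) :=
  prod_range_succ _ _

theorem succ' (q z : ℂ) (n : ℕ) : qPoch q z (n + 1) = (1 - z) * qPoch q (z * q) n := by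
  simp only [qPoch, prod_range_succ', pow_zero, mul_one, pow_succ, mul_assoc, mul_comm q]
  ring

theorem tendsto_mul_pow_nhds_zero (hq : ‖q‖ < 1) (z : ℂ) :
    Tendsto (fun r : ℕ => z * q ^ r) atTop (𝓝 0) := by
  simpa using (tendsto_pow_atTop_nhds_zero_of_norm_lt_one hq).const_mul z

theorem summable_norm_mul_pow (hq : ‖q‖ < 1) (z : ℂ) : Summable fun r : ℕ => ‖z * q ^ r‖ := by
  simpa [norm_mul, norm_pow] using
    (summable_geometric_of_lt_one (norm_nonneg q) hq).mul_left ‖z‖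

theorem exists_norm_le (hq : ‖q‖ < 1) (z : ℂ) : ∃ C, ∀ k, ‖qPoch q z k‖ ≤ C :=
  exists_norm_prod_range_le (by simpa using summable_norm_mul_pow hq z)

theorem exists_norm_inv_le (hq : ‖q‖ < 1) (z : ℂ) : ∃ C, ∀ k, ‖(qPoch q z k)⁻¹‖ ≤ C := by
  have hsmall : ∀ᶠ r in atTop, ‖z * q ^ r‖ ≤ 1 / 2 :=
    (tendsto_mul_pow_nhds_zero hq z).norm.eventually
      (ge_mem_nhds (by norm_num : ‖(0 : ℂ)‖ < 1 / 2))
  have hsum : Summable fun r : ℕ => ‖(1 - z * q ^ r)⁻¹ - 1‖ :=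
    .of_norm_bounded_eventually_nat ((summable_norm_mul_pow hq z).mul_left 2) <|
      hsmall.mono fun r hr => by simpa using norm_inv_one_sub_sub_one_le hr
  simpa [qPoch, prod_inv_distrib] using exists_norm_prod_range_le hsum

end qPoch

namespace Psi1

variable {q p A B C D x y : ℂ}

noncomputable def term (q p A B C D x y : ℂ) (kl : ℕ × ℕ) : ℂ :=
  qPoch q A (kl.1 + kl.2) * qPoch p B kl.2 /
    (qPoch p C kl.2 * qPoch q D kl.1 * qPoch q q kl.1 * qPoch p p kl.2) *
    x ^ kl.1 * y ^ kl.2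

theorem eq_tsum_term : Psi1 q p A B C D x y = ∑' kl, term q p A B C D x y kl := rfl

theorem summable_term (hq : ‖q‖ < 1) (hp : ‖p‖ < 1) (hx : ‖x‖ < 1) (hy : ‖y‖ < 1) :
    Summable (term q p A B C D x y) := by
  obtain ⟨MA, hA⟩ := qPoch.exists_norm_le hq A
  obtain ⟨MB, hB⟩ := qPoch.exists_norm_le hp B
  obtain ⟨MC, hC⟩ := qPoch.exists_norm_inv_le hp C
  obtain ⟨MD, hD⟩ := qPoch.exists_norm_inv_le hq D
  obtain ⟨Mq, hQ⟩ := qPoch.exists_norm_inv_le hq q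
  obtain ⟨Mp, hP⟩ := qPoch.exists_norm_inv_le hp p
  have hgeom : Summable fun kl : ℕ × ℕ => ‖x‖ ^ kl.1 * ‖y‖ ^ kl.2 :=
    (summable_geometric_of_lt_one (norm_nonneg x) hx).mul_of_nonneg
      (summable_geometric_of_lt_one (norm_nonneg y) hy)
      (fun _ => by positivity) (fun _ => by positivity)
  refine .of_norm_bounded (hgeom.mul_left (MA * MB * MC * MD * Mq * Mp)) fun ⟨k, l⟩ => ?_
  simp only [term, div_eq_mul_inv, mul_inv, norm_mul, norm_pow]
  have := (norm_nonneg _).trans (hA 0); have := (norm_nonneg _).trans (hB 0)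
  have := (norm_nonneg _).trans (hC 0); have := (norm_nonneg _).trans (hD 0)
  have := (norm_nonneg _).trans (hQ 0); have := (norm_nonneg _).trans (hP 0)
  calc _ ≤ MA * MB * (MC * MD * Mq * Mp) * ‖x‖ ^ k * ‖y‖ ^ l := by
        gcongr
        exacts [hA _, hB _, hC _, hD _, hQ _, hP _]
    _ = _ := by ring

theorem term_B_mul_p_snd_zero (k : ℕ) :
    term q p A (B * p) C D x y (k, 0) = term q p A B C D x y (k, 0) := by
  simp [term]

theorem term_B_mul_p_sub_term (hp : ‖p‖ < 1) (k l : ℕ) :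
    term q p A (B * p) C D x y (k, l + 1) - term q p A B C D x y (k, l + 1) =
      B * (1 - A) * y / (1 - C) * term q p (A * q) (B * p) (C * p) D x y (k, l) := by
  have hu : (1 - p * p ^ l) * (1 - p * p ^ l)⁻¹ = 1 := by
    refine mul_inv_cancel₀ (sub_ne_zero.2 fun h => ?_)
    have : ‖p * p ^ l‖ < 1 := by
      rw [← pow_succ']; simpa using pow_lt_one₀ (norm_nonneg p) hp l.succ_ne_zero
    simp [← h] at this
  -- With the inverses split into atoms, the only cancellation needed is that of `1 - p ^ (l + 1)`;
  -- a vanishing `(C p;p)_l` or `(D;q)_k` is harmless since its inverse is `0` on both sides.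
  simp only [term, div_eq_mul_inv, ← add_assoc, qPoch.succ' q A, qPoch.succ' p B,
    qPoch.succ' p C, qPoch.succ p (B * p), qPoch.succ p p, mul_inv]
  linear_combination (1 - A) * B * qPoch q (A * q) (k + l) * qPoch p (B * p) l *
    (1 - C)⁻¹ * (qPoch p (C * p) l)⁻¹ * (qPoch q D k)⁻¹ * (qPoch q q k)⁻¹ *
    (qPoch p p l)⁻¹ * x ^ k * y ^ (l + 1) * hu

theorem contiguous_b (hq : ‖q‖ < 1) (hp : ‖p‖ < 1) (hx : ‖x‖ < 1) (hy : ‖y‖ < 1) :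
    Psi1 q p A (B * p) C D x y =
      Psi1 q p A B C D x y +
        B * (1 - A) * y / (1 - C) * Psi1 q p (A * q) (B * p) (C * p) D x y := by
  have hshift : Function.Injective (Prod.map id Nat.succ : ℕ × ℕ → ℕ × ℕ) :=
    Function.injective_id.prodMap Nat.succ_injective
  have hsupp : (Function.support fun kl =>
      term q p A (B * p) C D x y kl - term q p A B C D x y kl) ⊆
        Set.range (Prod.map id Nat.succ) := by
    rintro ⟨k, _ | l⟩ hkl
    · simp [term_B_mul_p_snd_zero] at hkl
    · exact ⟨(k, l), rfl⟩
  rw [← sub_eq_iff_eq_add', eq_tsum_term, eq_tsum_term, eq_tsum_term,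
    ← (summable_term hq hp hx hy).tsum_sub (summable_term hq hp hx hy),
    ← tsum_mul_left, ← hshift.tsum_eq hsupp]
  exact tsum_congr fun ⟨k, l⟩ => term_B_mul_p_sub_term hp k l

end Psi1

theorem stmt2_general (q p a b c d x y : ℂ)
    (hq0 : 0 < ‖q‖) (hq1 : ‖q‖ < 1)
    (hp0 : 0 < ‖p‖) (hp1 : ‖p‖ < 1)
    (hx : ‖x‖ < 1) (hy : ‖y‖ < 1) :
    Psi1 q p (q ^ a) (p ^ (b + 1)) (p ^ c) (q ^ d) x y =
      Psi1 q p (q ^ a) (p ^ b) (p ^ c) (q ^ d) x y +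
        p ^ b * (1 - q ^ a) * y / (1 - p ^ c) *
          Psi1 q p (q ^ (a + 1)) (p ^ (b + 1)) (p ^ (c + 1)) (q ^ d) x y := by
  simp only [Complex.cpow_add _ _ (norm_pos_iff.1 hq0), Complex.cpow_add _ _ (norm_pos_iff.1 hp0),
    Complex.cpow_one]
  exact Psi1.contiguous_b hq1 hp1 hx hy

theorem stmt2 (q p a b c d x y : ℂ)
    (hq0 : 0 < ‖q‖) (hq1 : ‖q‖ < 1)
    (hp0 : 0 < ‖p‖) (hp1 : ‖p‖ < 1)
    (hx : ‖x‖ < 1) (hy : ‖y‖ < 1)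
    (hc : p ^ c ≠ 1) :
    Psi1 q p (q ^ a) (p ^ (b + 1)) (p ^ c) (q ^ d) x y =
      Psi1 q p (q ^ a) (p ^ b) (p ^ c) (q ^ d) x y +
        p ^ b * (1 - q ^ a) * y / (1 - p ^ c) *
          Psi1 q p (q ^ (a + 1)) (p ^ (b + 1)) (p ^ (c + 1)) (q ^ d) x y :=
  stmt2_general q p a b c d x y hq0 hq1 hp0 hp1 hx hy
end

section
/- For |q|<1, |p|<1, |x|<1, |y|<1: Ψ₁(q^a,p^b;p^c,q^d;q,p,x,y) = (1−p^b)·Ψ₁(q^a,p^{b+1};p^c,q^d;q,p,x,y) + p^b·Ψ₁(q^a,p^b;p^c,q^d;q,p,x,py). -/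
/-!
Termwise the identity is the contiguous relation `(B;p)ₗ = (1 - B) (Bp;p)ₗ + B pˡ (B;p)ₗ` with
`B = pᵇ`, since `pᵇ⁺¹ = pᵇ p` and `pˡ yˡ = (p y)ˡ`. Splitting the double series needs all three
series to converge, and they do because the coefficients of `Ψ₁` are bounded: the finite products
`(z;q)ₙ` converge to `(z;q)_∞`, and so do their reciprocals, to `(z;q)_∞⁻¹` when no factor
vanishes and to `0` otherwise.
-/

open scoped BigOperators
open Filter

open scoped Topology NNReal

lemma qPoch_succ (q z : ℂ) (n : ℕ) :
    qPoch q z (n + 1) = qPoch q z n * (1 - z * q ^ n) :=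
  Finset.prod_range_succ _ _

lemma qPoch_succ' (q z : ℂ) (n : ℕ) :
    qPoch q z (n + 1) = (1 - z) * qPoch q (z * q) n := by
  rw [qPoch, Finset.prod_range_succ', pow_zero, mul_one, mul_comm]
  simp only [qPoch, pow_succ', mul_assoc]

lemma qPoch_eq_one_sub_mul_qPoch_mul_add (p B : ℂ) (l : ℕ) :
    qPoch p B l = (1 - B) * qPoch p (B * p) l + B * p ^ l * qPoch p B l := by
  rw [← qPoch_succ', qPoch_succ]
  ring

lemma summable_norm_mul_pow {q : ℂ} (z : ℂ) (hq : ‖q‖ < 1) :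
    Summable fun r : ℕ => ‖z * q ^ r‖ := by
  simpa only [norm_mul, norm_pow] using
    (summable_geometric_of_lt_one (norm_nonneg q) hq).mul_left ‖z‖

lemma tendsto_qPoch_qPochInf {q : ℂ} (z : ℂ) (hq : ‖q‖ < 1) :
    Tendsto (qPoch q z) atTop (𝓝 (qPochInf q z)) := by
  have h := multipliable_one_add_of_summable (f := fun r : ℕ => -(z * q ^ r))
    (by simpa only [norm_neg] using summable_norm_mul_pow z hq)
  unfold qPoch qPochInf
  simpa only [← sub_eq_add_neg] using h.hasProd.tendsto_prod_nat

lemma exists_tendsto_inv_qPoch {q : ℂ} (z : ℂ) (hq : ‖q‖ < 1) :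
    ∃ L, Tendsto (fun n => (qPoch q z n)⁻¹) atTop (𝓝 L) := by
  by_cases hzero : ∃ r, 1 - z * q ^ r = 0
  · obtain ⟨r, hr⟩ := hzero
    refine ⟨0, tendsto_const_nhds.congr' ?_⟩
    filter_upwards [eventually_gt_atTop r] with n hn
    rw [qPoch, Finset.prod_eq_zero (Finset.mem_range.mpr hn) hr, inv_zero]
  · simp only [not_exists] at hzero
    have hne : qPochInf q z ≠ 0 := by
      simpa only [qPochInf, ← sub_eq_add_neg] using
        tprod_one_add_ne_zero_of_summable (f := fun r : ℕ => -(z * q ^ r))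
          (by simpa only [← sub_eq_add_neg] using hzero)
          (by simpa only [norm_neg] using summable_norm_mul_pow z hq)
    exact ⟨_, (tendsto_qPoch_qPochInf z hq).inv₀ hne⟩

lemma exists_nnreal_norm_le_of_tendsto {E : Type*} [SeminormedAddCommGroup E] {u : ℕ → E}
    {a : E} (h : Tendsto u atTop (𝓝 a)) : ∃ M : ℝ≥0, ∀ n, ‖u n‖ ≤ M := by
  obtain ⟨M, hM⟩ := h.cauchySeq.norm_bddAbove
  exact ⟨M.toNNReal, fun n => (hM ⟨n, rfl⟩).trans M.le_coe_toNNReal⟩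

lemma exists_norm_qPoch_le {q : ℂ} (z : ℂ) (hq : ‖q‖ < 1) :
    ∃ M : ℝ≥0, ∀ n, ‖qPoch q z n‖ ≤ M :=
  exists_nnreal_norm_le_of_tendsto (tendsto_qPoch_qPochInf z hq)

lemma exists_norm_inv_qPoch_le {q : ℂ} (z : ℂ) (hq : ‖q‖ < 1) :
    ∃ M : ℝ≥0, ∀ n, ‖(qPoch q z n)⁻¹‖ ≤ M :=
  let ⟨_, h⟩ := exists_tendsto_inv_qPoch z hq
  exists_nnreal_norm_le_of_tendsto h

lemma summable_mul_pow_mul_pow_of_norm_le {c : ℕ × ℕ → ℂ} {M : ℝ} (hc : ∀ kl, ‖c kl‖ ≤ M)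
    {x y : ℂ} (hx : ‖x‖ < 1) (hy : ‖y‖ < 1) :
    Summable fun kl : ℕ × ℕ => c kl * x ^ kl.1 * y ^ kl.2 := by
  have hgeom : Summable fun kl : ℕ × ℕ => ‖x‖ ^ kl.1 * ‖y‖ ^ kl.2 :=
    (summable_geometric_of_lt_one (norm_nonneg _) hx).mul_of_nonneg
      (summable_geometric_of_lt_one (norm_nonneg _) hy) (fun _ => by positivity)
      (fun _ => by positivity)
  refine (hgeom.mul_left M).of_norm_bounded fun kl => ?_
  rw [norm_mul, norm_mul, norm_pow, norm_pow, mul_assoc]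
  gcongr
  exact hc kl

lemma summable_psi1_term {q p : ℂ} (A B C D : ℂ) {x y : ℂ} (hq : ‖q‖ < 1) (hp : ‖p‖ < 1)
    (hx : ‖x‖ < 1) (hy : ‖y‖ < 1) :
    Summable fun kl : ℕ × ℕ =>
      qPoch q A (kl.1 + kl.2) * qPoch p B kl.2 /
        (qPoch p C kl.2 * qPoch q D kl.1 * qPoch q q kl.1 * qPoch p p kl.2) *
        x ^ kl.1 * y ^ kl.2 := by
  obtain ⟨MA, hA⟩ := exists_norm_qPoch_le A hq
  obtain ⟨MB, hB⟩ := exists_norm_qPoch_le B hp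
  obtain ⟨MC, hC⟩ := exists_norm_inv_qPoch_le C hp
  obtain ⟨MD, hD⟩ := exists_norm_inv_qPoch_le D hq
  obtain ⟨MQ, hQ⟩ := exists_norm_inv_qPoch_le q hq
  obtain ⟨MP, hP⟩ := exists_norm_inv_qPoch_le p hp
  refine summable_mul_pow_mul_pow_of_norm_le (M := MA * MB * MC * MD * MQ * MP)
    (fun ⟨k, l⟩ => ?_) hx hy
  simp only [div_eq_mul_inv, mul_inv, norm_mul, ← mul_assoc]
  gcongr
  exacts [hA _, hB _, hC _, hD _, hQ _, hP _]

theorem stmt3_general (q p a b c d x y : ℂ)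
    (hq1 : ‖q‖ < 1)
    (hp0 : 0 < ‖p‖) (hp1 : ‖p‖ < 1)
    (hx : ‖x‖ < 1) (hy : ‖y‖ < 1) :
    Psi1 q p (q ^ a) (p ^ b) (p ^ c) (q ^ d) x y =
      (1 - p ^ b) * Psi1 q p (q ^ a) (p ^ (b + 1)) (p ^ c) (q ^ d) x y +
        p ^ b * Psi1 q p (q ^ a) (p ^ b) (p ^ c) (q ^ d) x (p * y) := by
  have hpy : ‖p * y‖ < 1 := by
    rw [norm_mul]
    exact mul_lt_one_of_nonneg_of_lt_one_left (norm_nonneg p) hp1 hy.le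
  rw [Complex.cpow_add _ _ (norm_pos_iff.mp hp0), Complex.cpow_one]
  unfold Psi1
  rw [← tsum_mul_left, ← tsum_mul_left, ← Summable.tsum_add
    ((summable_psi1_term _ _ _ _ hq1 hp1 hx hy).mul_left _)
    ((summable_psi1_term _ _ _ _ hq1 hp1 hx hpy).mul_left _)]
  refine tsum_congr fun ⟨k, l⟩ => ?_
  linear_combination (qPoch q (q ^ a) (k + l) /
      (qPoch p (p ^ c) l * qPoch q (q ^ d) k * qPoch q q k * qPoch p p l) * x ^ k * y ^ l) *
    qPoch_eq_one_sub_mul_qPoch_mul_add p (p ^ b) l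

theorem stmt3 (q p a b c d x y : ℂ)
    (hq0 : 0 < ‖q‖) (hq1 : ‖q‖ < 1)
    (hp0 : 0 < ‖p‖) (hp1 : ‖p‖ < 1)
    (hx : ‖x‖ < 1) (hy : ‖y‖ < 1) :
    Psi1 q p (q ^ a) (p ^ b) (p ^ c) (q ^ d) x y =
      (1 - p ^ b) * Psi1 q p (q ^ a) (p ^ (b + 1)) (p ^ c) (q ^ d) x y +
        p ^ b * Psi1 q p (q ^ a) (p ^ b) (p ^ c) (q ^ d) x (p * y) :=
  stmt3_general q p a b c d x y hq1 hp0 hp1 hx hy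
end
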